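/- Let W be a real vector space, ω ∈ Λ²W* a 2-form and Ω ∈ ΛⁿW* an n-form with ω ∧ Ω = 0. Let L ⊆ W be a subspace on which both ω and Ω restrict to zero. Then for any vectors Y, Z ∈ W, the (n−1)-form identity (ι(Y)ω) ∧ (ι(Z)Ω) = (ι(Z)ω) ∧ (ι(Y)Ω) holds after restriction to L. -/

import Mathlib

open scoped TensorProduct

/-- The wedge product of two real-valued alternating forms. -/
noncomputable def wedge {W : Type*} [AddCommGroup W] [Module ℝ W] {a b : ℕ}
    (ω : W [⋀^Fin a]→ₗ[ℝ] ℝ) (η : W [⋀^Fin b]→ₗ[ℝ] ℝ) : W [⋀^Fin (a + b)]→ₗ[ℝ] ℝ :=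
  ((LinearMap.mul' ℝ ℝ).compAlternatingMap (ω.domCoprod η)).domDomCongr finSumFinEquiv

/-!
Since `a! b! (α ∧ β)` is the alternatization of `α ⊗ β`, splitting the permutations according to
the image of the first slot expands a wedge product along its first argument: for an
`(a + 1)`-form `α`,
`(a + 1) (α ∧ β)(y, u) = (ι(y)α ∧ β)(u) - ∑ₛ (ι(uₛ)α ∧ β)(u with y in slot s)`
(putting `y` in slot `s`, rather than deleting `uₛ` and prepending `y`, absorbs the sign `(-1)ˢ`).
Apply this twice to `0 = (ω ∧ Ω)(Y, Z, ℓ)`, where `ℓ` is a tuple of vectors of `L`. Every term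
that evaluates `ω` or `Ω` on vectors of `ℓ` alone vanishes, and what remains is twice the
difference of the two sides of the identity evaluated at `ℓ`.
-/

open Function

namespace Fin

theorem cons_comp_swap_zero_succ {α : Type*} {n : ℕ} (z : α) (ℓ : Fin n → α) (s : Fin n) :
    (fun j : Fin n => (cons z ℓ : Fin (n + 1) → α) (Equiv.swap 0 s.succ j.succ)) =
      update ℓ s z := by
  funext j
  by_cases hj : j = s
  · subst hj; simp
  · rw [Equiv.swap_apply_of_ne_of_ne (succ_ne_zero j) (by simpa using hj), update_of_ne hj,
      cons_succ]

end Fin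

namespace MultilinearMap

variable {R M N ι ι' : Type*} [CommSemiring R] [AddCommMonoid M] [Module R M] [AddCommGroup N]
  [Module R N] [Fintype ι] [DecidableEq ι] [Fintype ι'] [DecidableEq ι'] {n : ℕ}

theorem alternatization_domDomCongr (e : ι ≃ ι') (g : MultilinearMap R (fun _ : ι => M) N) :
    alternatization (g.domDomCongr e) = (alternatization g).domDomCongr e := by
  ext v
  simp only [alternatization_apply, AlternatingMap.domDomCongr_apply, domDomCongr_apply]
  rw [← (Equiv.permCongr e).sum_comp]
  refine Finset.sum_congr rfl fun σ _ => ?_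
  simp [Equiv.Perm.sign_permCongr, Equiv.permCongr_apply]

theorem alternatization_apply_cons (g : MultilinearMap R (fun _ : Fin (n + 1) => M) N) (z : M)
    (ℓ : Fin n → M) :
    alternatization g (Fin.cons z ℓ) = alternatization (g.curryLeft z) ℓ -
      ∑ s, alternatization (g.curryLeft (ℓ s)) (update ℓ s z) := by
  simp only [alternatization_apply, domDomCongr_apply, curryLeft_apply]
  rw [← Equiv.Perm.decomposeFin.symm.sum_comp, Fintype.sum_prod_type, Fin.sum_univ_succ,
    sub_eq_add_neg, ← Finset.sum_neg_distrib]
  congr 1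
  · refine Finset.sum_congr rfl fun τ _ => ?_
    rw [Equiv.Perm.decomposeFin.symm_sign, if_pos rfl, one_mul]
    congr 2
    funext i
    refine Fin.cases ?_ (fun j => ?_) i <;> simp
  · refine Finset.sum_congr rfl fun s _ => ?_
    rw [← Finset.sum_neg_distrib]
    refine Finset.sum_congr rfl fun τ _ => ?_
    rw [Equiv.Perm.decomposeFin.symm_sign, if_neg (Fin.succ_ne_zero s), neg_one_mul, Units.neg_smul]
    congr 3
    funext i
    refine Fin.cases ?_ (fun j => ?_) i
    · simp
    · rw [Equiv.Perm.decomposeFin_symm_apply_succ, Fin.cons_succ]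
      exact congrFun (Fin.cons_comp_swap_zero_succ z ℓ s) (τ j)

end MultilinearMap

namespace AlternatingMap

variable {R M N : Type*} [Semiring R] [AddCommMonoid M] [Module R M] [AddCommGroup N]
  [Module R N] {n : ℕ}

theorem map_vecCons_vecCons_swap (f : M [⋀^Fin 2]→ₗ[R] N) (a b : M) : f ![a, b] = -f ![b, a] := by
  rw [← f.map_swap ![b, a] (i := 0) (j := 1) (by decide)]
  congr 1
  funext i
  fin_cases i <;> rfl

theorem map_cons_update_swap (f : M [⋀^Fin (n + 1)]→ₗ[R] N) (a b : M) (w : Fin n → M)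
    (s : Fin n) : f (Fin.cons a (update w s b)) = -f (Fin.cons b (update w s a)) := by
  have hswap : (Fin.cons b (update w s a) : Fin (n + 1) → M) =
      Fin.cons a (update w s b) ∘ Equiv.swap 0 s.succ := by
    funext i
    refine Fin.cases (by simp) (fun j => ?_) i
    rw [comp_apply, congrFun (Fin.cons_comp_swap_zero_succ a (update w s b) s) j, update_idem,
      Fin.cons_succ]
  rw [hswap, f.map_swap _ (Fin.succ_ne_zero s).symm, neg_neg]

end AlternatingMap

section Wedge

variable {W : Type*} [AddCommGroup W] [Module ℝ W]

noncomputable def wedgeTensor {a b N : ℕ} (α : W [⋀^Fin a]→ₗ[ℝ] ℝ) (β : W [⋀^Fin b]→ₗ[ℝ] ℝ)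
    (h : a + b = N) : MultilinearMap ℝ (fun _ : Fin N => W) ℝ :=
  ((LinearMap.mul' ℝ ℝ).compMultilinearMap
    ((α : MultilinearMap ℝ (fun _ : Fin a => W) ℝ).domCoprod β)).domDomCongr
    (finSumFinEquiv.trans (finCongr h))

theorem wedgeTensor_apply {a b N : ℕ} (α : W [⋀^Fin a]→ₗ[ℝ] ℝ) (β : W [⋀^Fin b]→ₗ[ℝ] ℝ)
    (h : a + b = N) (v : Fin N → W) :
    wedgeTensor α β h v =
      α (fun i => v (Fin.cast h (Fin.castAdd b i))) *
        β (fun j => v (Fin.cast h (Fin.natAdd a j))) := by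
  simp [wedgeTensor]

theorem alternatization_wedgeTensor_apply {a b N : ℕ} (α : W [⋀^Fin a]→ₗ[ℝ] ℝ)
    (β : W [⋀^Fin b]→ₗ[ℝ] ℝ) (h : a + b = N) (v : Fin N → W) :
    MultilinearMap.alternatization (wedgeTensor α β h) v =
      (a.factorial * b.factorial : ℝ) * wedge α β (v ∘ Fin.cast h) := by
  rw [wedgeTensor, MultilinearMap.alternatization_domDomCongr,
    LinearMap.compMultilinearMap_alternatization, MultilinearMap.domCoprod_alternization_eq]
  simp only [wedge, AlternatingMap.domDomCongr_apply, LinearMap.compAlternatingMap_apply,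
    AlternatingMap.smul_apply, map_nsmul, Fintype.card_fin]
  rw [nsmul_eq_mul, Nat.cast_mul]
  rfl

theorem wedgeTensor_curryLeft {a b N : ℕ} (α : W [⋀^Fin (a + 1)]→ₗ[ℝ] ℝ)
    (β : W [⋀^Fin b]→ₗ[ℝ] ℝ) (h : a + b = N) (y : W) :
    (wedgeTensor α β (by omega : a + 1 + b = N + 1)).curryLeft y =
      wedgeTensor (α.curryLeft y) β h := by
  ext u
  simp only [MultilinearMap.curryLeft_apply, wedgeTensor_apply,
    AlternatingMap.curryLeft_apply_apply]
  congr 2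
  · funext i
    exact Fin.cases rfl (fun _ => rfl) i
  · funext j
    rw [show Fin.cast _ (Fin.natAdd (a + 1) j) = (Fin.cast h (Fin.natAdd a j)).succ from
      Fin.ext (by simp; omega)]
    rfl

theorem wedge_apply_cons {a b N : ℕ} (α : W [⋀^Fin (a + 1)]→ₗ[ℝ] ℝ) (β : W [⋀^Fin b]→ₗ[ℝ] ℝ)
    (h : a + b = N) (y : W) (u : Fin N → W) :
    (a + 1 : ℝ) * wedge α β (Fin.cons y u ∘ Fin.cast (by omega : a + 1 + b = N + 1)) =
      wedge (α.curryLeft y) β (u ∘ Fin.cast h) -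
        ∑ s, wedge (α.curryLeft (u s)) β (update u s y ∘ Fin.cast h) := by
  have key := MultilinearMap.alternatization_apply_cons
    (wedgeTensor α β (by omega : a + 1 + b = N + 1)) y u
  simp only [alternatization_wedgeTensor_apply, wedgeTensor_curryLeft _ _ h] at key
  have hfac : (a.factorial * b.factorial : ℝ) ≠ 0 := by positivity
  apply mul_left_cancel₀ hfac
  rw [mul_sub, Finset.mul_sum, ← key, Nat.factorial_succ]
  push_cast
  ring

theorem wedge_zero_form_apply {b : ℕ} (γ : W [⋀^Fin 0]→ₗ[ℝ] ℝ) (β : W [⋀^Fin b]→ₗ[ℝ] ℝ)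
    (u : Fin b → W) : wedge γ β (u ∘ Fin.cast (zero_add b)) = γ ![] * β u := by
  have htensor : wedgeTensor γ β (zero_add b) = ((γ ![] • β : W [⋀^Fin b]→ₗ[ℝ] ℝ) :
      MultilinearMap ℝ (fun _ : Fin b => W) ℝ) := by
    ext v
    rw [wedgeTensor_apply, AlternatingMap.coe_multilinearMap, AlternatingMap.smul_apply,
      smul_eq_mul, Subsingleton.elim (fun _ => _) ![]]
    congr 2
    funext j
    exact congrArg v (Fin.ext (zero_add _))
  have key := alternatization_wedgeTensor_apply γ β (zero_add b) u
  rw [htensor, AlternatingMap.coe_alternatization, Fintype.card_fin] at key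
  have hfac : (b.factorial : ℝ) ≠ 0 := by positivity
  apply mul_left_cancel₀ hfac
  simpa [mul_left_comm] using key.symm

theorem wedge_one_form_apply_cons {b : ℕ} (α : W [⋀^Fin 1]→ₗ[ℝ] ℝ) (β : W [⋀^Fin b]→ₗ[ℝ] ℝ) (y : W)
    (u : Fin b → W) :
    wedge α β (Fin.cons y u ∘ Fin.cast (Nat.add_comm 1 b)) =
      α ![y] * β u - ∑ s, α ![u s] * β (update u s y) := by
  have key := wedge_apply_cons α β (zero_add b) y u
  rw [Nat.cast_zero, zero_add, one_mul] at key
  simp only [wedge_zero_form_apply] at key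
  exact key

theorem wedge_one_form_curryLeft_apply {n : ℕ} (α : W [⋀^Fin 1]→ₗ[ℝ] ℝ)
    (Ω : W [⋀^Fin (n + 1)]→ₗ[ℝ] ℝ) (Z : W) (x : Fin (n + 1) → W) :
    wedge α (Ω.curryLeft Z) (x ∘ Fin.cast (Nat.add_comm 1 n)) =
      ∑ p, α ![x p] * Ω (update x p Z) := by
  obtain ⟨y, u, rfl⟩ : ∃ y u, x = Fin.cons y u := ⟨x 0, Fin.tail x, (Fin.cons_self_tail x).symm⟩
  rw [wedge_one_form_apply_cons, Fin.sum_univ_succ]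
  simp only [Fin.cons_zero, Fin.cons_succ, AlternatingMap.curryLeft_apply_apply,
    Fin.update_cons_zero, ← Fin.cons_update, Ω.map_cons_update_swap y Z, mul_neg,
    Finset.sum_neg_distrib]
  exact sub_eq_add_neg _ _

theorem sum_map_update_comm_of_wedge_eq_zero {n : ℕ} (ω : W [⋀^Fin 2]→ₗ[ℝ] ℝ)
    (Ω : W [⋀^Fin (n + 1)]→ₗ[ℝ] ℝ) (hωΩ : wedge ω Ω = 0) (Y Z : W) (x : Fin (n + 1) → W)
    (hΩ : Ω x = 0) (hω : ∀ s t, ω ![x s, x t] = 0) :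
    ∑ s, ω ![Y, x s] * Ω (update x s Z) = ∑ s, ω ![Z, x s] * Ω (update x s Y) := by
  have expand := wedge_apply_cons ω Ω (Nat.add_comm 1 (n + 1)) Y (Fin.cons Z x)
  rw [hωΩ, AlternatingMap.zero_apply, mul_zero, Fin.sum_univ_succ] at expand
  simp only [Fin.cons_zero, Fin.cons_succ, Fin.update_cons_zero, ← Fin.cons_update,
    wedge_one_form_apply_cons, AlternatingMap.curryLeft_apply_apply] at expand
  have hinner : ∀ i, ∑ s, ω ![x i, update x i Y s] * Ω (update (update x i Y) s Z) =
      ω ![x i, Y] * Ω (update x i Z) := fun i => by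
    rw [Finset.sum_eq_single i (fun s _ hsi => by rw [update_of_ne hsi, hω, zero_mul])
      (by simp), update_self, update_idem]
  simp only [hinner] at expand
  simp only [hΩ, mul_zero, zero_sub, ω.map_vecCons_vecCons_swap (x _), neg_mul,
    Finset.sum_sub_distrib, Finset.sum_neg_distrib] at expand
  linarith

end Wedge

/-- Let `W` be a real vector space, `ω` a 2-form and `Ω` an `n`-form
(`n = "n'+1"`) with `ω ∧ Ω = 0`. Let `L ⊆ W` be a subspace on which both `ω` and `Ω`
restrict to zero. Then for any vectors `Y, Z ∈ W` the identity
`(ι(Y)ω) ∧ (ι(Z)Ω) = (ι(Z)ω) ∧ (ι(Y)Ω)` holds after restriction to `L`. -/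
theorem statement7 (W : Type*) [AddCommGroup W] [Module ℝ W] (n : ℕ)
    (ω : W [⋀^Fin 2]→ₗ[ℝ] ℝ) (Ω : W [⋀^Fin (n + 1)]→ₗ[ℝ] ℝ)
    (hωΩ : wedge ω Ω = 0)
    (L : Submodule ℝ W)
    (hω : ω.compLinearMap L.subtype = 0)
    (hΩ : Ω.compLinearMap L.subtype = 0)
    (Y Z : W) :
    (wedge (ω.curryLeft Y) (Ω.curryLeft Z)).compLinearMap L.subtype =
    (wedge (ω.curryLeft Z) (Ω.curryLeft Y)).compLinearMap L.subtype := by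
  ext v
  set u : Fin (n + 1) → L := v ∘ Fin.cast (Nat.add_comm n 1)
  have hv : (fun i => L.subtype (v i)) = (fun j => (u j : W)) ∘ Fin.cast (Nat.add_comm 1 n) := by
    funext i
    simp [u]
  have hΩu : Ω (fun j => (u j : W)) = 0 := by
    simpa using DFunLike.congr_fun hΩ u
  have hωu : ∀ s t, ω ![(u s : W), u t] = 0 := fun s t => by
    have h := DFunLike.congr_fun hω ![u s, u t]
    rw [AlternatingMap.compLinearMap_apply, AlternatingMap.zero_apply] at h
    convert h using 2
    funext i
    fin_cases i <;> rfl
  simp only [AlternatingMap.compLinearMap_apply, hv, wedge_one_form_curryLeft_apply]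
  exact sum_map_update_comm_of_wedge_eq_zero ω Ω hωΩ Y Z _ hΩu hωu
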